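/- Let C̃ be a symmetric positive definite M×M matrix, and for α ∈ ℝ^M with A_α = C̃ + α1ᵀ + 1αᵀ positive definite, define v(α) = 1/(1ᵀA_α⁻¹1) and C_α = A_α − v(α)11ᵀ. Then the function α ↦ ‖C_α‖_F² has nonnegative Laplacian: Δ‖C_α‖_F² = Tr(Hess ‖C_α‖_F²) ≥ 0, with (1/4)Δ‖C_α‖_F² = M²(1 − v(α)Tr(A_α⁻¹)) + c(Tr(A_α⁻¹) − v(α)·1ᵀA_α⁻²1) + 3M(M·v(α)²·1ᵀA_α⁻²1 − 1) where c = 1ᵀC̃1, assuming Σαᵢ = 0. -/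

import Mathlib

open Matrix BigOperators

/-- `A_α = C̃ + α1ᵀ + 1αᵀ`. -/
noncomputable def Amat {M : ℕ} (Ct : Matrix (Fin M) (Fin M) ℝ) (α : Fin M → ℝ) :
    Matrix (Fin M) (Fin M) ℝ :=
  Ct + vecMulVec α (1 : Fin M → ℝ) + vecMulVec (1 : Fin M → ℝ) α

/-- `v(α) = 1/(1ᵀ A_α⁻¹ 1)`. -/
noncomputable def vfun {M : ℕ} (Ct : Matrix (Fin M) (Fin M) ℝ) (α : Fin M → ℝ) : ℝ :=
  1 / ((1 : Fin M → ℝ) ⬝ᵥ ((Amat Ct α)⁻¹ *ᵥ (1 : Fin M → ℝ)))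

/-- `C_α = A_α − v(α)·11ᵀ`. -/
noncomputable def Cmat {M : ℕ} (Ct : Matrix (Fin M) (Fin M) ℝ) (α : Fin M → ℝ) :
    Matrix (Fin M) (Fin M) ℝ :=
  Amat Ct α - vfun Ct α • vecMulVec (1 : Fin M → ℝ) (1 : Fin M → ℝ)

/-- Squared Frobenius norm `‖X‖_F² = Σᵢⱼ Xᵢⱼ²`. -/
noncomputable def frobSq {M : ℕ} (X : Matrix (Fin M) (Fin M) ℝ) : ℝ :=
  ∑ i, ∑ j, (X i j) ^ 2

/-- Partial derivative of a function of `α ∈ ℝ^M` in the `i`-th coordinate. -/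
noncomputable def pd {M : ℕ} (f : (Fin M → ℝ) → ℝ) (i : Fin M) (α : Fin M → ℝ) : ℝ :=
  deriv (fun t => f (Function.update α i t)) (α i)

/-!
Moving `α` by `s` along the `i`-th coordinate changes `A_α` by the symmetric rank-two matrix
`s (eᵢ1ᵀ + 1eᵢᵀ)`. By the matrix determinant lemma and Sherman–Morrison–Woodbury, with
`x = A⁻¹1`, `p = 1ᵀA⁻¹1` and `b = (A⁻¹)ᵢᵢ`, one gets `1ᵀ(A + s(eᵢ1ᵀ + 1eᵢᵀ))⁻¹1 = p / d(s)` where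
`d(s) = (1 + s xᵢ)² - s² p b`. Hence `v` is a quadratic polynomial in `s`, so is every entry of
`C_α`, and the second derivative of `‖C_α‖_F²` is read off from the coefficients. Summing over `i`,
`(1/4) Δ = M² - 3M + 2M²‖x‖²/p² + (1ᵀA1 - M²/p)(Tr A⁻¹ - ‖x‖²/p)`,
and the Cauchy–Schwarz inequalities `p² ≤ M‖x‖²`, `M² ≤ (1ᵀA1) p` and `‖x‖² ≤ Tr(A⁻¹) p`
show that this is at least `M² - M ≥ 0`.
-/

namespace Matrix

section CommSemiring

variable {n R : Type*} [Fintype n] [CommSemiring R]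

theorem one_dotProduct_mulVec_one (X : Matrix n n R) : 1 ⬝ᵥ X *ᵥ 1 = ∑ j, ∑ k, X j k := by
  simp [mulVec, dotProduct]

theorem IsSymm.dotProduct_mulVec_comm {A : Matrix n n R} (hA : A.IsSymm) (u w : n → R) :
    u ⬝ᵥ A *ᵥ w = w ⬝ᵥ A *ᵥ u := by
  rw [dotProduct_mulVec, ← mulVec_transpose, hA.eq, dotProduct_comm]

theorem IsSymm.dotProduct_mul_self_mulVec {S : Matrix n n R} (hS : S.IsSymm) (u : n → R) :
    u ⬝ᵥ (S * S) *ᵥ u = (S *ᵥ u) ⬝ᵥ (S *ᵥ u) := by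
  rw [← mulVec_mulVec, dotProduct_mulVec, ← mulVec_transpose, hS.eq]

end CommSemiring

section Field

variable {n K : Type*} [Fintype n] [DecidableEq n] [Field K]

theorem det_add_smul_vecMulVec_add_vecMulVec {A : Matrix n n K} (hA : IsUnit A.det)
    (u w : n → K) (s : K) :
    (A + s • (vecMulVec w u + vecMulVec u w)).det
      = A.det * ((1 + s * (u ⬝ᵥ A⁻¹ *ᵥ w)) * (1 + s * (w ⬝ᵥ A⁻¹ *ᵥ u))
          - s ^ 2 * (u ⬝ᵥ A⁻¹ *ᵥ u) * (w ⬝ᵥ A⁻¹ *ᵥ w)) := by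
  have hUV : s • (vecMulVec w u + vecMulVec u w) = (of ![w, u])ᵀ * of ![s • u, s • w] := by
    ext k l
    simp [Matrix.mul_apply, Fin.sum_univ_two, vecMulVec_apply]
    ring
  have entry : ∀ a b, (of ![s • u, s • w] * A⁻¹ * (of ![w, u])ᵀ) a b
      = ![s • u, s • w] a ⬝ᵥ A⁻¹ *ᵥ ![w, u] b := fun a b => by
    rw [Matrix.mul_assoc]
    simp only [mul_apply, dotProduct, mulVec, transpose_apply, of_apply]
  rw [hUV, det_add_mul _ _ hA, det_fin_two]
  congr 1
  simp only [Matrix.add_apply, entry]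
  simp
  ring

theorem dotProduct_inv_add_smul_vecMulVec_add_vecMulVec_mulVec {A : Matrix n n K}
    (hA : IsUnit A.det) (hAs : A.IsSymm) (u w : n → K) (s : K) :
    u ⬝ᵥ (A + s • (vecMulVec w u + vecMulVec u w))⁻¹ *ᵥ u
      = u ⬝ᵥ A⁻¹ *ᵥ u / ((1 + s * (w ⬝ᵥ A⁻¹ *ᵥ u)) ^ 2
          - s ^ 2 * (u ⬝ᵥ A⁻¹ *ᵥ u) * (w ⬝ᵥ A⁻¹ *ᵥ w)) := by
  set p := u ⬝ᵥ A⁻¹ *ᵥ u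
  set r := w ⬝ᵥ A⁻¹ *ᵥ u
  set b := w ⬝ᵥ A⁻¹ *ᵥ w
  set D := (1 + s * r) ^ 2 - s ^ 2 * p * b
  have hr : u ⬝ᵥ A⁻¹ *ᵥ w = r := hAs.inv.dotProduct_mulVec_comm u w
  have hdet : (A + s • (vecMulVec w u + vecMulVec u w)).det = A.det * D := by
    rw [det_add_smul_vecMulVec_add_vecMulVec hA, hr, ← sq]
  -- For `D = 0` the updated matrix is singular: its `⁻¹` is `0`, and so is `p / D`.
  by_cases hD : D = 0
  · rw [nonsing_inv_apply_not_isUnit _ (by rw [hdet, hD, mul_zero]; exact not_isUnit_zero),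
      zero_mulVec, dotProduct_zero, hD, div_zero]
  -- The Sherman–Morrison–Woodbury solution of `(A + s (w uᵀ + u wᵀ)) y = u`.
  set y := A⁻¹ *ᵥ u - (s / D) • (p • A⁻¹ *ᵥ w + (r + s * (r ^ 2 - p * b)) • A⁻¹ *ᵥ u)
  have huy : u ⬝ᵥ y = p / D := by
    simp only [y, dotProduct_sub, dotProduct_smul, dotProduct_add, hr, smul_eq_mul]
    field_simp
    ring
  have hwy : w ⬝ᵥ y = (r + s * (r ^ 2 - p * b)) / D := by
    simp only [y, dotProduct_sub, dotProduct_smul, dotProduct_add, smul_eq_mul]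
    field_simp
    ring
  have hAy : A *ᵥ y = u - (s / D) • (p • w + (r + s * (r ^ 2 - p * b)) • u) := by
    simp only [y, mulVec_sub, mulVec_smul, mulVec_add, mulVec_mulVec, mul_nonsing_inv _ hA,
      one_mulVec]
  have hy : u = (A + s • (vecMulVec w u + vecMulVec u w)) *ᵥ y := by
    rw [add_mulVec, smul_mulVec, add_mulVec, vecMulVec_mulVec, vecMulVec_mulVec, huy, hwy, hAy]
    ext i
    simp
    field_simp
    ring
  have : Invertible (A + s • (vecMulVec w u + vecMulVec u w)) :=
    invertibleOfIsUnitDet _ (by rw [hdet]; exact hA.mul (isUnit_iff_ne_zero.2 hD))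
  rw [inv_mulVec_eq_vec hy, huy]

end Field

section Real

variable {n : Type*} [Fintype n]

theorem PosSemidef.sq_dotProduct_mulVec_le {S : Matrix n n ℝ} (hS : S.PosSemidef)
    (u w : n → ℝ) : (u ⬝ᵥ S *ᵥ w) ^ 2 ≤ (u ⬝ᵥ S *ᵥ u) * (w ⬝ᵥ S *ᵥ w) := by
  have hSs : S.IsSymm := isHermitian_iff_isSymm.1 hS.isHermitian
  have h := discrim_le_zero (a := w ⬝ᵥ S *ᵥ w) (b := 2 * (u ⬝ᵥ S *ᵥ w)) (c := u ⬝ᵥ S *ᵥ u)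
    fun t => by
      have := hS.dotProduct_mulVec_nonneg (u + t • w)
      simp only [star_trivial, mulVec_add, mulVec_smul, dotProduct_add, add_dotProduct,
        dotProduct_smul, smul_dotProduct, smul_eq_mul, hSs.dotProduct_mulVec_comm w u] at this
      linarith
  rw [discrim] at h
  linarith

variable [DecidableEq n]

theorem PosSemidef.mulVec_dotProduct_mulVec_le_trace_mul {S : Matrix n n ℝ}
    (hS : S.PosSemidef) (u : n → ℝ) : (S *ᵥ u) ⬝ᵥ (S *ᵥ u) ≤ S.trace * (u ⬝ᵥ S *ᵥ u) := by
  rw [trace, Finset.sum_mul]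
  refine Finset.sum_le_sum fun i _ => ?_
  have h := hS.sq_dotProduct_mulVec_le (Pi.single i 1) u
  rwa [single_dotProduct, single_dotProduct, mulVec_single_one, one_mul, one_mul, sq] at h

theorem PosDef.sq_dotProduct_le {A : Matrix n n ℝ} (hA : A.PosDef) (u : n → ℝ) :
    (u ⬝ᵥ u) ^ 2 ≤ (u ⬝ᵥ A *ᵥ u) * (u ⬝ᵥ A⁻¹ *ᵥ u) := by
  have hAy : A *ᵥ (A⁻¹ *ᵥ u) = u := by
    rw [mulVec_mulVec, mul_nonsing_inv _ hA.det_pos.ne'.isUnit, one_mulVec]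
  have h := hA.posSemidef.sq_dotProduct_mulVec_le u (A⁻¹ *ᵥ u)
  rwa [hAy, dotProduct_comm (A⁻¹ *ᵥ u)] at h

theorem PosDef.one_dotProduct_inv_mulVec_one_pos [Nonempty n] {A : Matrix n n ℝ}
    (hA : A.PosDef) : 0 < 1 ⬝ᵥ A⁻¹ *ᵥ 1 := by
  simpa using hA.inv.dotProduct_mulVec_pos one_ne_zero

end Real

end Matrix

theorem sum_sum_single_add_single_sub_sq {n : Type*} [Fintype n] [DecidableEq n] (i : n)
    (u : ℝ) :
    ∑ j, ∑ k, ((Pi.single i 1 : n → ℝ) j + (Pi.single i 1 : n → ℝ) k - u) ^ 2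
      = 2 * Fintype.card n + 2 - 4 * Fintype.card n * u + Fintype.card n ^ 2 * u ^ 2 := by
  have h : ∀ j k : n, ((Pi.single i 1 : n → ℝ) j + (Pi.single i 1 : n → ℝ) k - u) ^ 2
      = (if j = i then 1 - 2 * u else 0) + (if k = i then 1 - 2 * u else 0)
        + (if j = i ∧ k = i then 2 else 0) + u ^ 2 := by
    intro j k
    by_cases hj : j = i <;> by_cases hk : k = i <;> simp [hj, hk] <;> ring
  simp [h, Finset.sum_add_distrib, ite_and]
  ring

theorem hasDerivAt_quadratic (a b c t₀ t : ℝ) :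
    HasDerivAt (fun t => a + b * (t - t₀) + c * (t - t₀) ^ 2) (b + 2 * c * (t - t₀)) t := by
  have h := (hasDerivAt_id' t).sub_const t₀
  exact (((h.const_mul b).const_add a).add ((h.pow 2).const_mul c)).congr_deriv (by ring)

theorem deriv_deriv_sum_sq_quadratic {ι : Type*} (s : Finset ι) (a b c : ι → ℝ) (t₀ : ℝ) :
    deriv (deriv fun t => ∑ k ∈ s, (a k + b k * (t - t₀) + c k * (t - t₀) ^ 2) ^ 2) t₀
      = ∑ k ∈ s, (2 * b k ^ 2 + 4 * a k * c k) := by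
  have h1 : deriv (fun t => ∑ k ∈ s, (a k + b k * (t - t₀) + c k * (t - t₀) ^ 2) ^ 2)
      = fun t => ∑ k ∈ s, 2 * (a k + b k * (t - t₀) + c k * (t - t₀) ^ 2)
          * (b k + 2 * c k * (t - t₀)) := by
    funext t
    exact (HasDerivAt.fun_sum fun k _ =>
      ((hasDerivAt_quadratic (a k) (b k) (c k) t₀ t).pow 2).congr_deriv (by ring)).deriv
  rw [h1]
  refine (HasDerivAt.fun_sum fun k _ => ?_).deriv
  have hq := hasDerivAt_quadratic (a k) (b k) (c k) t₀ t₀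
  have hl := (((hasDerivAt_id' t₀).sub_const t₀).const_mul (2 * c k)).const_add (b k)
  exact ((hq.const_mul 2).fun_mul hl).congr_deriv (by simp only [sub_self]; ring)

section CShift

variable {M : ℕ} {Ct : Matrix (Fin M) (Fin M) ℝ} {α : Fin M → ℝ}

theorem pd_pd_eq_deriv_deriv (f : (Fin M → ℝ) → ℝ) (i : Fin M) (α : Fin M → ℝ) :
    pd (pd f i) i α = deriv (deriv fun t => f (Function.update α i t)) (α i) := by
  simp only [pd, Function.update_idem, Function.update_self]

theorem frobSq_eq_sum_prod (X : Matrix (Fin M) (Fin M) ℝ) :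
    frobSq X = ∑ jk : Fin M × Fin M, X jk.1 jk.2 ^ 2 :=
  (Fintype.sum_prod_type' _).symm

theorem one_dotProduct_Amat_mulVec_one (Ct : Matrix (Fin M) (Fin M) ℝ) (α : Fin M → ℝ) :
    1 ⬝ᵥ Amat Ct α *ᵥ 1 = 1 ⬝ᵥ Ct *ᵥ 1 + 2 * M * ∑ i, α i := by
  simp only [one_dotProduct_mulVec_one, Amat, Matrix.add_apply, vecMulVec_apply, Pi.one_apply,
    mul_one, one_mul, Finset.sum_add_distrib, Finset.sum_const, Finset.card_univ,
    Fintype.card_fin, nsmul_eq_mul, ← Finset.mul_sum]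
  ring

theorem Amat_update (Ct : Matrix (Fin M) (Fin M) ℝ) (α : Fin M → ℝ) (i : Fin M) (t : ℝ) :
    Amat Ct (Function.update α i t)
      = Amat Ct α + (t - α i) • (vecMulVec (Pi.single i 1) 1 + vecMulVec 1 (Pi.single i 1)) := by
  ext j k
  simp only [Amat, Matrix.add_apply, Matrix.smul_apply, vecMulVec_apply, Function.update_apply,
    Pi.single_apply, Pi.one_apply, smul_eq_mul]
  split_ifs <;> subst_vars <;> ring

theorem vfun_update (hA : IsUnit (Amat Ct α).det) (hAs : (Amat Ct α).IsSymm)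
    (hp : 1 ⬝ᵥ (Amat Ct α)⁻¹ *ᵥ 1 ≠ 0) (i : Fin M) (t : ℝ) :
    vfun Ct (Function.update α i t) = vfun Ct α
      + 2 * ((Amat Ct α)⁻¹ *ᵥ 1) i / (1 ⬝ᵥ (Amat Ct α)⁻¹ *ᵥ 1) * (t - α i)
      + (((Amat Ct α)⁻¹ *ᵥ 1) i ^ 2 / (1 ⬝ᵥ (Amat Ct α)⁻¹ *ᵥ 1) - (Amat Ct α)⁻¹ i i)
        * (t - α i) ^ 2 := by
  rw [vfun, vfun, Amat_update, dotProduct_inv_add_smul_vecMulVec_add_vecMulVec_mulVec hA hAs,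
    single_dotProduct, single_dotProduct, mulVec_single_one]
  simp only [one_mul, col_apply]
  field_simp
  ring

theorem Cmat_update_apply (hA : IsUnit (Amat Ct α).det) (hAs : (Amat Ct α).IsSymm)
    (hp : 1 ⬝ᵥ (Amat Ct α)⁻¹ *ᵥ 1 ≠ 0) (i : Fin M) (t : ℝ) (j k : Fin M) :
    Cmat Ct (Function.update α i t) j k = Cmat Ct α j k
      + ((Pi.single i 1 : Fin M → ℝ) j + (Pi.single i 1 : Fin M → ℝ) k
          - 2 * ((Amat Ct α)⁻¹ *ᵥ 1) i / (1 ⬝ᵥ (Amat Ct α)⁻¹ *ᵥ 1)) * (t - α i)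
      + ((Amat Ct α)⁻¹ i i - ((Amat Ct α)⁻¹ *ᵥ 1) i ^ 2 / (1 ⬝ᵥ (Amat Ct α)⁻¹ *ᵥ 1))
        * (t - α i) ^ 2 := by
  simp only [Cmat, Matrix.sub_apply, Matrix.smul_apply, Amat_update, Matrix.add_apply,
    vecMulVec_apply, vfun_update hA hAs hp, Pi.one_apply, smul_eq_mul, mul_one, one_mul]
  ring

theorem pd_pd_frobSq_Cmat (hA : IsUnit (Amat Ct α).det) (hAs : (Amat Ct α).IsSymm)
    (hp : 1 ⬝ᵥ (Amat Ct α)⁻¹ *ᵥ 1 ≠ 0) (i : Fin M) :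
    pd (pd (fun a => frobSq (Cmat Ct a)) i) i α
      = 4 * M + 4 - 16 * M * ((Amat Ct α)⁻¹ *ᵥ 1) i / (1 ⬝ᵥ (Amat Ct α)⁻¹ *ᵥ 1)
        + 8 * M ^ 2 * ((Amat Ct α)⁻¹ *ᵥ 1) i ^ 2 / (1 ⬝ᵥ (Amat Ct α)⁻¹ *ᵥ 1) ^ 2
        + 4 * (1 ⬝ᵥ Amat Ct α *ᵥ 1 - M ^ 2 / (1 ⬝ᵥ (Amat Ct α)⁻¹ *ᵥ 1))
          * ((Amat Ct α)⁻¹ i i - ((Amat Ct α)⁻¹ *ᵥ 1) i ^ 2 / (1 ⬝ᵥ (Amat Ct α)⁻¹ *ᵥ 1)) := by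
  have hC : ∑ j, ∑ k, Cmat Ct α j k
      = 1 ⬝ᵥ Amat Ct α *ᵥ 1 - M ^ 2 / (1 ⬝ᵥ (Amat Ct α)⁻¹ *ᵥ 1) := by
    simp [Cmat, one_dotProduct_mulVec_one, vfun, Finset.sum_sub_distrib]
    ring
  rw [pd_pd_eq_deriv_deriv]
  simp_rw [frobSq_eq_sum_prod, Cmat_update_apply hA hAs hp]
  rw [deriv_deriv_sum_sq_quadratic, Finset.sum_add_distrib, ← Finset.mul_sum, ← Finset.sum_mul,
    ← Finset.mul_sum, Fintype.sum_prod_type' (fun j k => Cmat Ct α j k),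
    Fintype.sum_prod_type' (fun j k => ((Pi.single i 1 : Fin M → ℝ) j
      + (Pi.single i 1 : Fin M → ℝ) k - 2 * ((Amat Ct α)⁻¹ *ᵥ 1) i / (1 ⬝ᵥ (Amat Ct α)⁻¹ *ᵥ 1)) ^ 2),
    sum_sum_single_add_single_sub_sq, hC, Fintype.card_fin]
  field_simp
  ring

theorem sum_pd_pd_frobSq_Cmat (hA : IsUnit (Amat Ct α).det) (hAs : (Amat Ct α).IsSymm)
    (hp : 1 ⬝ᵥ (Amat Ct α)⁻¹ *ᵥ 1 ≠ 0) :
    ∑ i, pd (pd (fun a => frobSq (Cmat Ct a)) i) i α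
      = 4 * M ^ 2 - 12 * M
        + 8 * M ^ 2 * (((Amat Ct α)⁻¹ *ᵥ 1) ⬝ᵥ ((Amat Ct α)⁻¹ *ᵥ 1))
          / (1 ⬝ᵥ (Amat Ct α)⁻¹ *ᵥ 1) ^ 2
        + 4 * (1 ⬝ᵥ Amat Ct α *ᵥ 1 - M ^ 2 / (1 ⬝ᵥ (Amat Ct α)⁻¹ *ᵥ 1))
          * ((Amat Ct α)⁻¹.trace - (((Amat Ct α)⁻¹ *ᵥ 1) ⬝ᵥ ((Amat Ct α)⁻¹ *ᵥ 1))
            / (1 ⬝ᵥ (Amat Ct α)⁻¹ *ᵥ 1)) := by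
  set x := (Amat Ct α)⁻¹ *ᵥ 1
  set p := 1 ⬝ᵥ x
  set q := 1 ⬝ᵥ Amat Ct α *ᵥ 1
  have hx : ∑ i, x i = p := (one_dotProduct x).symm
  have hw : ∑ i, x i ^ 2 = x ⬝ᵥ x := by simp only [dotProduct, sq]
  have htr : ∑ i, (Amat Ct α)⁻¹ i i = (Amat Ct α)⁻¹.trace := rfl
  calc ∑ i, pd (pd (fun a => frobSq (Cmat Ct a)) i) i α
      = ∑ i, (4 * M + 4 - 16 * M / p * x i
          + (8 * M ^ 2 / p ^ 2 - 4 * (q - M ^ 2 / p) / p) * x i ^ 2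
          + 4 * (q - M ^ 2 / p) * (Amat Ct α)⁻¹ i i) :=
        Finset.sum_congr rfl fun i _ => by rw [pd_pd_frobSq_Cmat hA hAs hp]; ring
    _ = _ := by
        simp only [Finset.sum_add_distrib, Finset.sum_sub_distrib, ← Finset.mul_sum,
          Finset.sum_const, Finset.card_univ, Fintype.card_fin, nsmul_eq_mul]
        rw [hx, hw, htr]
        field_simp
        ring

theorem sum_pd_pd_frobSq_Cmat_nonneg (hA : (Amat Ct α).PosDef) (hM : 0 < M) :
    0 ≤ ∑ i, pd (pd (fun a => frobSq (Cmat Ct a)) i) i α := by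
  have : Nonempty (Fin M) := ⟨⟨0, hM⟩⟩
  have hp := hA.one_dotProduct_inv_mulVec_one_pos
  have hw := hA.inv.posSemidef.mulVec_dotProduct_mulVec_le_trace_mul 1
  have hq := hA.sq_dotProduct_le 1
  rw [one_dotProduct_one, Fintype.card_fin] at hq
  have hMw : (1 ⬝ᵥ (Amat Ct α)⁻¹ *ᵥ 1) ^ 2
      ≤ M * (((Amat Ct α)⁻¹ *ᵥ 1) ⬝ᵥ ((Amat Ct α)⁻¹ *ᵥ 1)) := by
    simpa [one_dotProduct, dotProduct, ← sq] using
      sq_sum_le_card_mul_sum_sq (s := Finset.univ) (f := (Amat Ct α)⁻¹ *ᵥ 1)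
  have hq' : 0 ≤ 1 ⬝ᵥ Amat Ct α *ᵥ 1 - M ^ 2 / (1 ⬝ᵥ (Amat Ct α)⁻¹ *ᵥ 1) := by
    rw [sub_nonneg, div_le_iff₀ hp]; exact hq
  have hw' : 0 ≤ (Amat Ct α)⁻¹.trace - ((Amat Ct α)⁻¹ *ᵥ 1) ⬝ᵥ ((Amat Ct α)⁻¹ *ᵥ 1)
      / (1 ⬝ᵥ (Amat Ct α)⁻¹ *ᵥ 1) := by
    rw [sub_nonneg, div_le_iff₀ hp]; exact hw
  have hMw' : 8 * (M : ℝ) ≤ 8 * M ^ 2 * (((Amat Ct α)⁻¹ *ᵥ 1) ⬝ᵥ ((Amat Ct α)⁻¹ *ᵥ 1))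
      / (1 ⬝ᵥ (Amat Ct α)⁻¹ *ᵥ 1) ^ 2 := by
    rw [le_div_iff₀ (by positivity)]; nlinarith
  have hM1 : (1 : ℝ) ≤ M := by exact_mod_cast hM
  rw [sum_pd_pd_frobSq_Cmat hA.det_pos.ne'.isUnit (isHermitian_iff_isSymm.1 hA.isHermitian)
    hp.ne']
  nlinarith [mul_nonneg hq' hw']

end CShift

theorem laplacian_frobSq_nonneg_general {M : ℕ} (Ct : Matrix (Fin M) (Fin M) ℝ)
    (α : Fin M → ℝ) (hA : (Amat Ct α).PosDef) (ha : ∑ i, α i = 0) :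
    (∑ i, pd (pd (fun a => frobSq (Cmat Ct a)) i) i α)
        = 4 * ((M : ℝ) ^ 2 * (1 - vfun Ct α * ((Amat Ct α)⁻¹).trace)
            + ((1 : Fin M → ℝ) ⬝ᵥ (Ct *ᵥ (1 : Fin M → ℝ)))
                * (((Amat Ct α)⁻¹).trace
                  - vfun Ct α
                      * ((1 : Fin M → ℝ) ⬝ᵥ (((Amat Ct α)⁻¹ * (Amat Ct α)⁻¹)
                          *ᵥ (1 : Fin M → ℝ))))
            + 3 * (M : ℝ)
                * ((M : ℝ) * (vfun Ct α) ^ 2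
                    * ((1 : Fin M → ℝ) ⬝ᵥ (((Amat Ct α)⁻¹ * (Amat Ct α)⁻¹)
                        *ᵥ (1 : Fin M → ℝ))) - 1))
      ∧ 0 ≤ ∑ i, pd (pd (fun a => frobSq (Cmat Ct a)) i) i α := by
  rcases Nat.eq_zero_or_pos M with rfl | hM
  · simp [dotProduct]
  have : Nonempty (Fin M) := ⟨⟨0, hM⟩⟩
  have hAs : (Amat Ct α).IsSymm := isHermitian_iff_isSymm.1 hA.isHermitian
  have hp := hA.one_dotProduct_inv_mulVec_one_pos
  refine ⟨?_, sum_pd_pd_frobSq_Cmat_nonneg hA hM⟩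
  rw [sum_pd_pd_frobSq_Cmat hA.det_pos.ne'.isUnit hAs hp.ne', one_dotProduct_Amat_mulVec_one, ha,
    mul_zero, add_zero, vfun, hAs.inv.dotProduct_mul_self_mulVec]
  field_simp
  ring

/-- Convexity of the C-SHIFT energy (Theorem 1): on the hyperplane `Σαᵢ = 0`, the Laplacian
of `α ↦ ‖C_α‖_F²` satisfies
`(1/4)Δ‖C_α‖_F² = M²(1 − v(α)Tr(A_α⁻¹)) + c(Tr(A_α⁻¹) − v(α)·1ᵀA_α⁻²1)
  + 3M(M·v(α)²·1ᵀA_α⁻²1 − 1)` with `c = 1ᵀC̃1`, and is nonnegative. -/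
theorem laplacian_frobSq_nonneg {M : ℕ} (Ct : Matrix (Fin M) (Fin M) ℝ) (hCt : Ct.PosDef)
    (α : Fin M → ℝ) (hA : (Amat Ct α).PosDef) (ha : ∑ i, α i = 0) :
    (∑ i, pd (pd (fun a => frobSq (Cmat Ct a)) i) i α)
        = 4 * ((M : ℝ) ^ 2 * (1 - vfun Ct α * ((Amat Ct α)⁻¹).trace)
            + ((1 : Fin M → ℝ) ⬝ᵥ (Ct *ᵥ (1 : Fin M → ℝ)))
                * (((Amat Ct α)⁻¹).trace
                  - vfun Ct α
                      * ((1 : Fin M → ℝ) ⬝ᵥ (((Amat Ct α)⁻¹ * (Amat Ct α)⁻¹)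
                          *ᵥ (1 : Fin M → ℝ))))
            + 3 * (M : ℝ)
                * ((M : ℝ) * (vfun Ct α) ^ 2
                    * ((1 : Fin M → ℝ) ⬝ᵥ (((Amat Ct α)⁻¹ * (Amat Ct α)⁻¹)
                        *ᵥ (1 : Fin M → ℝ))) - 1))
      ∧ 0 ≤ ∑ i, pd (pd (fun a => frobSq (Cmat Ct a)) i) i α :=
  laplacian_frobSq_nonneg_general Ct α hA ha
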